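/- arXiv:2009.01358 — 2 statements merged into one kernel-verified Lean document; each statement's English description precedes it below -/
import Mathlib

section
/- Optimal substructure: if (τ₀,…,τ_m, s, t) minimizes V over all segmentations of {1,…,t} whose second-to-last change point is s, and m ≥ 1, then (τ₀,…,τ_m, s) minimizes V over all segmentations of {1,…,s} whose second-to-last change point is τ_m. -/
/-! Appending `t` maps `Segment(τ_m, s)` into `Segment(s, t)` (as `s < t`) and raises `V` by the
same amount `c τ_m s t + β` on every element, so minimality of the extension passes to the truncation. -/

def SegSet (T : ℕ) : Set (List ℕ) :=
  {l | l.Chain' (· < ·) ∧ l.head? = some 1 ∧ l.getLast? = some T}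

/-- `Segment(i,j)`: segmentations of `{1,…,j}` whose second-to-last change
point is `i`. -/
def SegEnd (i j : ℕ) : Set (List ℕ) :=
  {l | l ∈ SegSet j ∧ ∃ l₀ : List ℕ, l = l₀ ++ [i, j]}

noncomputable def tripleCosts (c : ℕ → ℕ → ℕ → ℝ) : List ℕ → ℝ
  | a :: b :: d :: rest => c a b d + tripleCosts c (b :: d :: rest)
  | _ => 0

noncomputable def V (c : ℕ → ℕ → ℕ → ℝ) (β : ℝ) (l : List ℕ) : ℝ :=
  tripleCosts c l + β * ((l.length - 2 : ℕ) : ℝ)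

theorem tripleCosts_append_triple (c : ℕ → ℕ → ℕ → ℝ) (l : List ℕ) (a b d : ℕ) :
    tripleCosts c (l ++ [a, b, d]) = tripleCosts c (l ++ [a, b]) + c a b d := by
  induction l using List.twoStepInduction with
  | nil => simp [tripleCosts]
  | singleton x => simp [tripleCosts]
  | cons_cons x y l _ ih =>
    cases l with
    | nil => simp [tripleCosts]; ring
    | cons w r =>
      simp only [List.cons_append, tripleCosts] at ih ⊢
      rw [ih]; ring

theorem V_append_triple (c : ℕ → ℕ → ℕ → ℝ) (β : ℝ) (l : List ℕ) (a b d : ℕ) :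
    V c β (l ++ [a, b, d]) = V c β (l ++ [a, b]) + (c a b d + β) := by
  simp only [V, tripleCosts_append_triple, List.length_append, List.length_cons,
    List.length_nil]
  push_cast [show l.length + (0 + 1 + 1 + 1) - 2 = l.length + 1 by omega,
    show l.length + (0 + 1 + 1) - 2 = l.length by omega]
  ring

theorem append_singleton_mem_segSet_iff {L : List ℕ} {x t : ℕ} (hL : L.getLast? = some x) :
    L ++ [t] ∈ SegSet t ↔ L ∈ SegSet x ∧ x < t := by
  have hne : L ≠ [] := by rintro rfl; simp at hL
  simp [SegSet, List.Chain', List.isChain_append, List.head?_append_of_ne_nil _ hne, hL]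
  tauto

theorem append_pair_mem_segEnd_iff {l : List ℕ} {i j : ℕ} :
    l ++ [i, j] ∈ SegEnd i j ↔ l ++ [i, j] ∈ SegSet j :=
  ⟨And.left, fun h => ⟨h, l, rfl⟩⟩

theorem append_triple_mem_segEnd_iff {l : List ℕ} {i j k : ℕ} :
    l ++ [i, j, k] ∈ SegEnd j k ↔ l ++ [i, j] ∈ SegEnd i j ∧ j < k := by
  have hsplit : l ++ [i, j, k] = (l ++ [i]) ++ [j, k] := by simp
  rw [hsplit, append_pair_mem_segEnd_iff, append_pair_mem_segEnd_iff, ← hsplit,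
    show l ++ [i, j, k] = (l ++ [i, j]) ++ [k] by simp]
  exact append_singleton_mem_segSet_iff (by simp)

theorem stmt2_general (c : ℕ → ℕ → ℕ → ℝ) (β : ℝ) (s t τm : ℕ)
    (l₀ : List ℕ)
    (hmem : l₀ ++ [τm, s, t] ∈ SegEnd s t)
    (hopt : ∀ l' ∈ SegEnd s t, V c β (l₀ ++ [τm, s, t]) ≤ V c β l') :
    l₀ ++ [τm, s] ∈ SegEnd τm s ∧
      ∀ l' ∈ SegEnd τm s, V c β (l₀ ++ [τm, s]) ≤ V c β l' := by
  obtain ⟨htrunc, hst⟩ := append_triple_mem_segEnd_iff.1 hmem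
  refine ⟨htrunc, fun l' hl' => ?_⟩
  obtain ⟨l₁, rfl⟩ := hl'.2
  have hext := hopt _ (append_triple_mem_segEnd_iff.2 ⟨hl', hst⟩)
  rw [V_append_triple, V_append_triple] at hext
  linarith

/-- Optimal substructure: if `(τ₀,…,τ_m,s,t)` (with `m ≥ 1`, i.e. `l₀ ≠ []`)
minimizes `V` over `Segment(s,t)`, then `(τ₀,…,τ_m,s)` minimizes `V` over
`Segment(τ_m,s)`. -/
theorem stmt2 (c : ℕ → ℕ → ℕ → ℝ) (β : ℝ) (s t τm : ℕ)
    (l₀ : List ℕ) (h₀ : l₀ ≠ [])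
    (hmem : l₀ ++ [τm, s, t] ∈ SegEnd s t)
    (hopt : ∀ l' ∈ SegEnd s t, V c β (l₀ ++ [τm, s, t]) ≤ V c β l') :
    l₀ ++ [τm, s] ∈ SegEnd τm s ∧
      ∀ l' ∈ SegEnd τm s, V c β (l₀ ++ [τm, s]) ≤ V c β l' :=
  stmt2_general c β s t τm l₀ hmem hopt
end

section
/- The global optimum of the penalized segmentation problem equals the minimum over the last interior change point: min over all segmentations 𝒯 of {1,…,T} with at least one interior change point of V(𝒯) equals min_{1 < s < T} G(s,T), where G satisfies the Bellman recursion with G(1,j) = 0. -/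
theorem Finset.isLeast_image_biUnion_inf' {ι α β : Type*} [LinearOrder β] {s : Finset ι}
    (hs : s.Nonempty) {S : ι → Set α} {f : α → β} {g : ι → β}
    (h : ∀ i ∈ s, IsLeast (f '' S i) (g i)) :
    IsLeast (f '' ⋃ i ∈ s, S i) (s.inf' hs g) := by
  refine ⟨?_, ?_⟩
  · obtain ⟨i, hi, hg⟩ := s.exists_mem_eq_inf' hs g
    rw [hg]
    exact Set.image_mono (Set.subset_biUnion_of_mem hi) (h i hi).1
  · rintro _ ⟨x, hx, rfl⟩
    obtain ⟨i, hi, hxi⟩ := Set.mem_iUnion₂.mp hx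
    exact (s.inf'_le g hi).trans ((h i hi).2 ⟨x, hxi, rfl⟩)

theorem List.exists_eq_cons_append_pair {α : Type*} {l : List α} (h : 3 ≤ l.length) :
    ∃ x r b a, l = x :: r ++ [b, a] := by
  rcases l with _ | ⟨x, l⟩
  · simp at h
  obtain ⟨l, a, rfl⟩ := (List.eq_nil_or_concat l).resolve_left (by rintro rfl; simp at h)
  obtain ⟨r, b, rfl⟩ := (List.eq_nil_or_concat l).resolve_left (by rintro rfl; simp at h)
  exact ⟨x, r, b, a, by simp⟩

theorem setOf_mem_segSet_three_le_length (T : ℕ) :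
    {l ∈ SegSet T | 3 ≤ l.length} = ⋃ s ∈ Finset.Ioo 1 T, SegEnd s T := by
  ext l
  simp only [Set.mem_ofPred_eq, Set.mem_iUnion, Finset.mem_Ioo, exists_prop, SegEnd]
  constructor
  · rintro ⟨hl, hlen⟩
    obtain ⟨x, r, b, a, rfl⟩ := List.exists_eq_cons_append_pair hlen
    obtain ⟨hchain, hhead, hlast⟩ := hl
    have hx : x = 1 := by simpa using hhead
    have ha : a = T := by
      rw [List.getLast?_append] at hlast
      simpa using hlast
    subst hx ha
    have hp := List.isChain_iff_pairwise.mp hchain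
    have h1b : 1 < b := List.rel_of_pairwise_cons hp (by simp)
    have hba : b < a := by simpa using hp.sublist (List.sublist_append_right (1 :: r) [b, a])
    exact ⟨b, ⟨h1b, hba⟩, ⟨hchain, hhead, hlast⟩, 1 :: r, rfl⟩
  · rintro ⟨s, ⟨hs, -⟩, hl, l₀, rfl⟩
    refine ⟨hl, ?_⟩
    rcases l₀ with _ | ⟨x, l₀⟩
    · have : s = 1 := by simpa using hl.2.1
      omega
    · simp

/-- The global optimum over segmentations with at least one interior change
point equals `min_{1 < s < T} G(s,T)`. -/
theorem stmt4 (T : ℕ) (hT : 3 ≤ T) (c : ℕ → ℕ → ℕ → ℝ) (β : ℝ)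
    (G : ℕ → ℕ → ℝ)
    (hG : ∀ s, 1 < s → s < T → IsLeast (V c β '' SegEnd s T) (G s T)) :
    IsLeast (V c β '' {l ∈ SegSet T | 3 ≤ l.length})
      ((Finset.Ioo 1 T).inf' ⟨2, Finset.mem_Ioo.mpr (by omega)⟩
        (fun s => G s T)) := by
  rw [setOf_mem_segSet_three_le_length]
  exact Finset.isLeast_image_biUnion_inf' _ fun s hs =>
    hG s (Finset.mem_Ioo.mp hs).1 (Finset.mem_Ioo.mp hs).2
end
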